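/- arXiv:1903.03353 — 8 statements merged into one kernel-verified Lean document; each statement's English description precedes it below -/
import Mathlib

section
/- Let A be an n×n pattern matrix and B an n×m pattern matrix. Let Ā be the pattern matrix obtained from A by keeping all off-diagonal entries and replacing each diagonal entry A_ii by ∗ if A_ii = 0 and by ? otherwise. Then the structured system (A,B) is strongly structurally controllable if and only if both of the following hold: (1) the n×(n+m) pattern matrix [A B] has full row rank, and (2) the n×(n+m) pattern matrix [Ā B] has full row rank. -/
/-- The symbols of a pattern matrix: fixed zero (`0`), arbitrary nonzero (`∗`),
and arbitrary (`?`). -/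
inductive PSym : Type
  | zero
  | star
  | arb
  deriving DecidableEq

open Matrix

/-- The pattern class of a pattern matrix: real matrices that are `0` where the pattern
is `0`, nonzero where the pattern is `∗`, and unrestricted where the pattern is `?`. -/
def PatternClass {R C : Type*} (M : Matrix R C PSym) : Set (Matrix R C ℝ) :=
  {A | ∀ i j, (M i j = PSym.zero → A i j = 0) ∧ (M i j = PSym.star → A i j ≠ 0)}

/-- A pattern matrix has full row rank if every member of its pattern class
has full row rank. -/
def PatternFullRowRank {R C : Type*} [Fintype R] [Fintype C] (M : Matrix R C PSym) : Prop :=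
  ∀ A ∈ PatternClass M, A.rank = Fintype.card R

/-- Hautus test: `(A, B)` is controllable iff `[A - λI, B]` has rank `n` for all `λ ∈ ℂ`. -/
def Controllable {n m : ℕ} (A : Matrix (Fin n) (Fin n) ℝ) (B : Matrix (Fin n) (Fin m) ℝ) : Prop :=
  ∀ l : ℂ, (Matrix.fromCols (A.map (Complex.ofReal) - l • (1 : Matrix (Fin n) (Fin n) ℂ))
      (B.map (Complex.ofReal))).rank = n

/-- Hautus test for stabilizability: `[A - λI, B]` has rank `n` for all `λ` with `Re λ ≥ 0`. -/
def Stabilizable {n m : ℕ} (A : Matrix (Fin n) (Fin n) ℝ) (B : Matrix (Fin n) (Fin m) ℝ) : Prop :=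
  ∀ l : ℂ, 0 ≤ l.re →
    (Matrix.fromCols (A.map (Complex.ofReal) - l • (1 : Matrix (Fin n) (Fin n) ℂ))
      (B.map (Complex.ofReal))).rank = n

/-- Strong structural controllability of the structured system `(𝒜, ℬ)`. -/
def StrStrControllable {n m : ℕ} (𝒜 : Matrix (Fin n) (Fin n) PSym)
    (ℬ : Matrix (Fin n) (Fin m) PSym) : Prop :=
  ∀ A ∈ PatternClass 𝒜, ∀ B ∈ PatternClass ℬ, Controllable A B

/-- Strong structural stabilizability of the structured system `(𝒜, ℬ)`. -/
def StrStrStabilizable {n m : ℕ} (𝒜 : Matrix (Fin n) (Fin n) PSym)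
    (ℬ : Matrix (Fin n) (Fin m) PSym) : Prop :=
  ∀ A ∈ PatternClass 𝒜, ∀ B ∈ PatternClass ℬ, Stabilizable A B

/-- The pattern matrix `Ā` obtained from `𝒜` by replacing each diagonal entry by `∗`
if it is `0` and by `?` otherwise, keeping all off-diagonal entries. -/
def barPattern {n : ℕ} (𝒜 : Matrix (Fin n) (Fin n) PSym) : Matrix (Fin n) (Fin n) PSym :=
  fun i j => if i = j then (if 𝒜 i i = PSym.zero then PSym.star else PSym.arb) else 𝒜 i j

/-- The sets of black nodes obtainable in `G(M)` by repeatedly applying the color change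
rule, starting from the all-white coloring. The colorable nodes are the rows of `M`;
every node of `G(M)` corresponds to a column `c`, whose out-neighbors are the rows `k`
with `M k c ≠ 0`, and the edge from `c` to `k` is in `E_∗` iff `M k c = ∗`. A step colors
`j` black when some node `c` has `j` as its only white out-neighbor and `(c, j) ∈ E_∗`. -/
inductive ColorStep {R C : Type*} (M : Matrix R C PSym) : Set R → Prop
  | init : ColorStep M ∅
  | step (S : Set R) (c : C) (j : R)
      (hS : ColorStep M S)
      (hstar : M j c = PSym.star)
      (hwhite : j ∉ S)
      (huniq : ∀ k : R, M k c ≠ PSym.zero → k ∉ S → k = j) :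
      ColorStep M (insert j S)

/-- `G(M)` is colorable if all row-nodes can be colored black by repeated application
of the color change rule. -/
def PatternColorable {R C : Type*} (M : Matrix R C PSym) : Prop :=
  ColorStep M Set.univ

/-!
A member of a pattern class has a nonzero left null vector `z` only if the support of `z` is a
fort: no column meets it in a single nonzero entry that is a `∗`. Conversely every fort is the
support of a left null vector of some real member. Hence full row rank of a pattern, a statement
about real matrices, also holds for its complex members.

For `λ = 0` the Hautus matrix `[A - λI, B]` is a complex member of `[𝒜 ℬ]`, and for `λ ≠ 0` one
of `[Ā ℬ]`, which gives sufficiency. For necessity, `λ = 0` gives the first condition; for the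
second, a member `[X Y]` of `[Ā ℬ]` becomes, after a nonsingular diagonal scaling of the columns
of `X`, the Hautus matrix at a suitable real `λ` of a system in the class of `(𝒜, ℬ)`.
-/

lemma Matrix.rank_eq_card_iff_vecMul_eq_zero {R C K : Type*} [Field K] [Fintype R] [Fintype C]
    (M : Matrix R C K) : M.rank = Fintype.card R ↔ ∀ z : R → K, z ᵥ* M = 0 → z = 0 := by
  rw [rank_eq_finrank_span_row, ← Set.finrank, eq_comm,
    ← linearIndependent_iff_card_eq_finrank_span, ← vecMul_injective_iff, ← coe_vecMulLinear,
    injective_iff_map_eq_zero]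
  rfl

lemma Matrix.rank_eq_card_of_rank_map_eq_card {R C K L : Type*} [Field K] [Field L]
    [Fintype R] [Fintype C] (f : K →+* L) {M : Matrix R C K}
    (h : (M.map f).rank = Fintype.card R) : M.rank = Fintype.card R := by
  rw [rank_eq_card_iff_vecMul_eq_zero] at h ⊢
  intro z hz
  have hfz : f ∘ z = 0 := h _ <| funext fun c => by rw [← RingHom.map_vecMul, hz]; simp
  exact funext fun k => f.injective <| by simpa using congrFun hfz k

lemma Matrix.rank_fromCols_mul_diagonal {R C D K : Type*} [Field K] [Fintype R] [Fintype C]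
    [Fintype D] [DecidableEq C] [DecidableEq D] (X : Matrix R C K) (Y : Matrix R D K)
    {d : C → K} (hd : ∀ i, d i ≠ 0) :
    (fromCols (X * diagonal d) Y).rank = (fromCols X Y).rank := by
  have hdet : (fromBlocks (diagonal d) 0 0 (1 : Matrix D D K)).det ≠ 0 := by
    simp [Finset.prod_ne_zero_iff, hd]
  rw [← rank_mul_eq_left_of_det_ne_zero _ (fromCols X Y) hdet, fromCols_mul_fromBlocks]
  simp

lemma Finset.exists_sum_eq_zero_and_ne_zero_on {ι K : Type*} [Fintype ι] [DecidableEq ι]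
    [Ring K] [CharZero K] (F : Finset ι) :
    ∃ v : ι → K, (∀ k ∉ F, v k = 0) ∧ (1 < F.card → ∀ k ∈ F, v k ≠ 0) ∧ ∑ k, v k = 0 := by
  rcases F.eq_empty_or_nonempty with rfl | ⟨a, ha⟩
  · exact ⟨0, by simp⟩
  refine ⟨fun k => (if k ∈ F then 1 else 0) - if k = a then (F.card : K) else 0, ?_, ?_, ?_⟩
  · intro k hk
    simp [hk, show k ≠ a from fun h => hk (h ▸ ha)]
  · intro hF k hk
    by_cases hka : k = a
    · have : (F.card : K) ≠ 1 := by exact_mod_cast hF.ne'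
      simpa [ha, hka, sub_eq_zero] using this.symm
    · simp [hk, hka]
  · simp [Finset.sum_sub_distrib]

section PatternClassIn

variable {R C D K : Type*}

/-- `PatternClass M` is `PatternClassIn ℝ M` by definition. -/
def PatternClassIn (K : Type*) [Zero K] (M : Matrix R C PSym) : Set (Matrix R C K) :=
  {A | ∀ i j, (M i j = PSym.zero → A i j = 0) ∧ (M i j = PSym.star → A i j ≠ 0)}

lemma fromCols_mem_patternClassIn [Zero K] {𝒳 : Matrix R C PSym} {𝒴 : Matrix R D PSym}
    {X : Matrix R C K} {Y : Matrix R D K} :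
    fromCols X Y ∈ PatternClassIn K (fromCols 𝒳 𝒴) ↔
      X ∈ PatternClassIn K 𝒳 ∧ Y ∈ PatternClassIn K 𝒴 :=
  ⟨fun h => ⟨fun i j => h i (Sum.inl j), fun i j => h i (Sum.inr j)⟩,
    fun h i c => c.casesOn (h.1 i) (h.2 i)⟩

lemma map_mem_patternClassIn {L : Type*} [Semiring K] [Semiring L] (f : K →+* L)
    {M : Matrix R C PSym} {X : Matrix R C K} (hf : Function.Injective f)
    (hX : X ∈ PatternClassIn K M) : X.map f ∈ PatternClassIn L M :=
  fun i j => ⟨fun h => by simp [(hX i j).1 h],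
    fun h => by simpa using (map_ne_zero_iff f hf).mpr ((hX i j).2 h)⟩

end PatternClassIn

section Fort

variable {R C : Type*}

/-- A fort in the sense of zero forcing: while all rows of `T` are white, the colour change rule
cannot blacken any of them. -/
def IsFort (M : Matrix R C PSym) (T : Set R) : Prop :=
  T.Nonempty ∧ ∀ c, ∀ j ∈ T, M j c = PSym.star → ∃ k ∈ T, k ≠ j ∧ M k c ≠ PSym.zero

lemma isFort_support_of_vecMul_eq_zero {K : Type*} [Semiring K] [NoZeroDivisors K] [Fintype R]
    {M : Matrix R C PSym} {H : Matrix R C K} (hH : H ∈ PatternClassIn K M) {z : R → K}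
    (hz0 : z ≠ 0) (hz : z ᵥ* H = 0) : IsFort M (Function.support z) := by
  refine ⟨Function.support_nonempty_iff.mpr hz0, fun c j hj hstar => ?_⟩
  by_contra! hzero
  have hsingle : (z ᵥ* H) c = z j * H j c := by
    refine Finset.sum_eq_single j (fun k _ hkj => ?_) (by simp)
    by_cases hk : z k = 0
    · simp [hk]
    · simp [(hH k c).1 (hzero k hk hkj)]
  exact mul_ne_zero hj ((hH j c).2 hstar) (by rw [← hsingle, hz, Pi.zero_apply])

lemma IsFort.exists_vecMul_eq_zero {K : Type*} [Ring K] [CharZero K] [Fintype R]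
    {M : Matrix R C PSym} {T : Set R} (hT : IsFort M T) :
    ∃ A ∈ PatternClassIn K M, ∃ z ≠ 0, z ᵥ* A = 0 := by
  classical
  let F : C → Finset R := fun c => {k | k ∈ T ∧ M k c ≠ PSym.zero}
  choose v hv_out hv_ne hv_sum using fun c => (F c).exists_sum_eq_zero_and_ne_zero_on (K := K)
  -- the `T`-part of each column of `A` sums to zero, so the indicator of `T` is a left null vector
  let A : Matrix R C K := fun k c => if k ∈ T then v c k else if M k c = PSym.star then 1 else 0
  let z : R → K := fun k => if k ∈ T then 1 else 0
  refine ⟨A, fun k c => ⟨fun hzero => ?_, fun hstar => ?_⟩, z, ?_, ?_⟩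
  · by_cases hk : k ∈ T
    · simp [A, hk, hv_out c k (by simp [F, hzero])]
    · simp [A, hk, hzero]
  · by_cases hk : k ∈ T
    · obtain ⟨k', hk', hk'k, hk'c⟩ := hT.2 c k hk hstar
      have hcard : 1 < (F c).card :=
        Finset.one_lt_card.mpr ⟨k, by simp [F, hk, hstar], k', by simp [F, hk', hk'c], hk'k.symm⟩
      simpa [A, hk] using hv_ne c hcard k (by simp [F, hk, hstar])
    · simp [A, hk, hstar]
  · obtain ⟨k, hk⟩ := hT.1
    exact fun h => by simpa [z, hk] using congrFun h k
  · funext c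
    rw [Pi.zero_apply, ← hv_sum c]
    refine Finset.sum_congr rfl fun k _ => ?_
    by_cases hk : k ∈ T
    · simp [z, A, hk]
    · simp [z, hk, hv_out c k (by simp [F, hk])]

theorem PatternFullRowRank.rank_eq_card [Fintype R] [Fintype C] {M : Matrix R C PSym}
    (hM : PatternFullRowRank M) {K : Type*} [Field K] {H : Matrix R C K}
    (hH : H ∈ PatternClassIn K M) : H.rank = Fintype.card R := by
  rw [rank_eq_card_iff_vecMul_eq_zero]
  by_contra! ⟨z, hz, hz0⟩
  obtain ⟨A, hA, y, hy0, hy⟩ :=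
    (isFort_support_of_vecMul_eq_zero hH hz0 hz).exists_vecMul_eq_zero (K := ℝ)
  exact hy0 ((rank_eq_card_iff_vecMul_eq_zero A).mp (hM A hA) y hy)

end Fort

section Hautus

variable {ι κ : Type*} [DecidableEq ι]

def hautusMatrix (A : Matrix ι ι ℝ) (B : Matrix ι κ ℝ) (l : ℂ) : Matrix ι (ι ⊕ κ) ℂ :=
  fromCols (A.map Complex.ofReal - l • 1) (B.map Complex.ofReal)

lemma controllable_iff_rank_hautusMatrix {n m : ℕ} (A : Matrix (Fin n) (Fin n) ℝ)
    (B : Matrix (Fin n) (Fin m) ℝ) : Controllable A B ↔ ∀ l, (hautusMatrix A B l).rank = n :=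
  Iff.rfl

lemma hautusMatrix_ofReal (A : Matrix ι ι ℝ) (B : Matrix ι κ ℝ) (l : ℝ) :
    hautusMatrix A B l = (fromCols (A - l • 1) B).map Complex.ofReal := by
  ext i (j | j)
  · by_cases hij : i = j <;> simp [hautusMatrix, one_apply, hij]
  · simp [hautusMatrix]

lemma hautusMatrix_zero_mem_patternClassIn {𝒜 : Matrix ι ι PSym} {ℬ : Matrix ι κ PSym}
    {A : Matrix ι ι ℝ} {B : Matrix ι κ ℝ} (hA : A ∈ PatternClass 𝒜) (hB : B ∈ PatternClass ℬ) :
    hautusMatrix A B 0 ∈ PatternClassIn ℂ (fromCols 𝒜 ℬ) := by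
  rw [hautusMatrix, zero_smul, sub_zero]
  exact fromCols_mem_patternClassIn.mpr ⟨map_mem_patternClassIn Complex.ofRealHom
    Complex.ofReal_injective hA, map_mem_patternClassIn Complex.ofRealHom
    Complex.ofReal_injective hB⟩

lemma map_sub_smul_one_mem_patternClassIn_barPattern {n : ℕ} {𝒜 : Matrix (Fin n) (Fin n) PSym}
    {A : Matrix (Fin n) (Fin n) ℝ} (hA : A ∈ PatternClass 𝒜) {l : ℂ} (hl : l ≠ 0) :
    A.map Complex.ofReal - l • 1 ∈ PatternClassIn ℂ (barPattern 𝒜) := by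
  intro i j
  by_cases hij : i = j
  · subst hij
    by_cases hAii : 𝒜 i i = PSym.zero
    · simp [barPattern, hAii, (hA i i).1 hAii, hl]
    · simp [barPattern, hAii]
  · simpa [barPattern, hij, one_apply] using hA i j

lemma hautusMatrix_mem_patternClassIn_barPattern {n m : ℕ} {𝒜 : Matrix (Fin n) (Fin n) PSym}
    {ℬ : Matrix (Fin n) (Fin m) PSym} {A : Matrix (Fin n) (Fin n) ℝ} {B : Matrix (Fin n) (Fin m) ℝ}
    (hA : A ∈ PatternClass 𝒜) (hB : B ∈ PatternClass ℬ) {l : ℂ} (hl : l ≠ 0) :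
    hautusMatrix A B l ∈ PatternClassIn ℂ (fromCols (barPattern 𝒜) ℬ) :=
  fromCols_mem_patternClassIn.mpr ⟨map_sub_smul_one_mem_patternClassIn_barPattern hA hl,
    map_mem_patternClassIn Complex.ofRealHom Complex.ofReal_injective hB⟩

end Hautus

section Necessity

variable {n m : ℕ} {𝒜 : Matrix (Fin n) (Fin n) PSym} {ℬ : Matrix (Fin n) (Fin m) PSym}

lemma exists_mul_diagonal_add_smul_one_mem_patternClass {X : Matrix (Fin n) (Fin n) ℝ}
    (hX : X ∈ PatternClass (barPattern 𝒜)) :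
    ∃ (l : ℝ) (d : Fin n → ℝ), (∀ i, d i ≠ 0) ∧ X * diagonal d + l • 1 ∈ PatternClass 𝒜 := by
  classical
  obtain ⟨l, hl⟩ := Infinite.exists_notMem_finset (insert 0 (Finset.univ.image fun i => -X i i))
  simp only [Finset.mem_insert, Finset.mem_image, Finset.mem_univ, true_and, not_or,
    not_exists] at hl
  -- scaling the columns with `𝒜 i i = 0` by `-l / X i i` cancels the shift on the diagonal
  let d : Fin n → ℝ := fun i => if 𝒜 i i = PSym.zero then -l / X i i else 1
  have hXii : ∀ i, 𝒜 i i = PSym.zero → X i i ≠ 0 := fun i hi =>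
    (hX i i).2 (by simp [barPattern, hi])
  have hd : ∀ i, d i ≠ 0 := fun i => by
    by_cases hi : 𝒜 i i = PSym.zero
    · simpa [d, hi, hl.1] using hXii i hi
    · simp [d, hi]
  refine ⟨l, d, hd, fun i j => ?_⟩
  by_cases hij : i = j
  · subst hij
    by_cases hi : 𝒜 i i = PSym.zero
    · simp [d, hi, mul_div_cancel₀ _ (hXii i hi)]
    · have : X i i + l ≠ 0 := fun h => hl.2 i (by linarith)
      simp [d, hi, this]
  · have hXij := hX i j
    simp only [barPattern, if_neg hij] at hXij
    refine ⟨fun h => ?_, fun h => ?_⟩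
    · simp [hXij.1 h, hij]
    · simp [hij, hXij.2 h, hd j]

lemma StrStrControllable.patternFullRowRank_fromCols (h : StrStrControllable 𝒜 ℬ) :
    PatternFullRowRank (fromCols 𝒜 ℬ) := by
  intro M hM
  rw [← fromCols_toCols M] at hM ⊢
  obtain ⟨hA, hB⟩ := fromCols_mem_patternClassIn.mp hM
  have hrank := (controllable_iff_rank_hautusMatrix _ _).mp (h _ hA _ hB) ((0 : ℝ) : ℂ)
  rw [hautusMatrix_ofReal, zero_smul, sub_zero] at hrank
  exact rank_eq_card_of_rank_map_eq_card Complex.ofRealHom (hrank.trans (Fintype.card_fin n).symm)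

lemma StrStrControllable.patternFullRowRank_fromCols_barPattern (h : StrStrControllable 𝒜 ℬ) :
    PatternFullRowRank (fromCols (barPattern 𝒜) ℬ) := by
  intro M hM
  rw [← fromCols_toCols M] at hM ⊢
  obtain ⟨hX, hB⟩ := fromCols_mem_patternClassIn.mp hM
  obtain ⟨l, d, hd, hA⟩ := exists_mul_diagonal_add_smul_one_mem_patternClass hX
  rw [← rank_fromCols_mul_diagonal _ _ hd]
  have hrank := (controllable_iff_rank_hautusMatrix _ _).mp (h _ hA _ hB) l
  rw [hautusMatrix_ofReal, add_sub_cancel_right] at hrank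
  exact rank_eq_card_of_rank_map_eq_card Complex.ofRealHom (hrank.trans (Fintype.card_fin n).symm)

end Necessity

/-- **Theorem 1 (algebraic conditions).** `(𝒜, ℬ)` is strongly structurally controllable
iff both `[𝒜 ℬ]` and `[𝒜bar ℬ]` have full row rank. -/
theorem ssc_iff_full_row_rank {n m : ℕ} (𝒜 : Matrix (Fin n) (Fin n) PSym)
    (ℬ : Matrix (Fin n) (Fin m) PSym) :
    StrStrControllable 𝒜 ℬ ↔
      PatternFullRowRank (Matrix.fromCols 𝒜 ℬ) ∧
      PatternFullRowRank (Matrix.fromCols (barPattern 𝒜) ℬ) := by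
  refine ⟨fun h => ⟨h.patternFullRowRank_fromCols, h.patternFullRowRank_fromCols_barPattern⟩,
    fun ⟨h, hbar⟩ A hA B hB => (controllable_iff_rank_hautusMatrix A B).mpr fun l => ?_⟩
  rcases eq_or_ne l 0 with rfl | hl
  · exact (h.rank_eq_card (hautusMatrix_zero_mem_patternClassIn hA hB)).trans (Fintype.card_fin n)
  · exact (hbar.rank_eq_card (hautusMatrix_mem_patternClassIn_barPattern hA hB hl)).trans
      (Fintype.card_fin n)
end

section
/- Let A be an n×n pattern matrix and B an n×m pattern matrix. Then the structured system (A,B) is strongly structurally stabilizable (i.e., the pair (A,B) is stabilizable for all A ∈ P(A) and B ∈ P(B)) if and only if (A,B) is strongly structurally controllable. -/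
open Matrix

/-!
Pattern classes are closed under negation, and replacing `(A, λ)` by `(-A, -λ)` only negates
the block `A - λI` of the Hautus matrix, which does not change its rank. Hence a Hautus test
failing at some `λ` with `Re λ < 0` for `(A, B)` fails at `-λ`, in the closed right half-plane,
for `(-A, B)`, which lies in the same pattern class.
-/

lemma neg_mem_patternClass {R C : Type*} {M : Matrix R C PSym} {A : Matrix R C ℝ}
    (hA : A ∈ PatternClass M) : -A ∈ PatternClass M := fun i j =>
  ⟨fun h => by simp [(hA i j).1 h], fun h => neg_ne_zero.mpr ((hA i j).2 h)⟩

lemma rank_fromCols_neg_left {K l m n : Type*} [Field K] [Fintype l] [Fintype m] [Fintype n]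
    [DecidableEq m] [DecidableEq n] (X : Matrix l m K) (Y : Matrix l n K) :
    (fromCols (-X) Y).rank = (fromCols X Y).rank := by
  have hfactor : fromCols (-X) Y =
      fromCols X Y * fromBlocks (-1 : Matrix m m K) 0 0 (1 : Matrix n n K) := by
    simp [fromCols_mul_fromBlocks]
  rw [hfactor, rank_mul_eq_left_of_isUnit_det]
  simp [det_neg]

lemma rank_hautus_neg {n m : ℕ} (A : Matrix (Fin n) (Fin n) ℝ) (B : Matrix (Fin n) (Fin m) ℝ)
    (l : ℂ) :
    (fromCols ((-A).map Complex.ofReal - (-l) • (1 : Matrix (Fin n) (Fin n) ℂ))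
      (B.map Complex.ofReal)).rank =
    (fromCols (A.map Complex.ofReal - l • (1 : Matrix (Fin n) (Fin n) ℂ))
      (B.map Complex.ofReal)).rank := by
  rw [← rank_fromCols_neg_left]
  congr 2
  ext i j
  simp only [Matrix.map_apply, Matrix.neg_apply, Matrix.sub_apply, Matrix.smul_apply,
    Complex.ofReal_neg]
  ring

lemma Controllable.stabilizable {n m : ℕ} {A : Matrix (Fin n) (Fin n) ℝ}
    {B : Matrix (Fin n) (Fin m) ℝ} (h : Controllable A B) : Stabilizable A B :=
  fun l _ => h l

lemma controllable_of_stabilizable_of_stabilizable_neg {n m : ℕ} {A : Matrix (Fin n) (Fin n) ℝ}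
    {B : Matrix (Fin n) (Fin m) ℝ} (hA : Stabilizable A B) (hnegA : Stabilizable (-A) B) :
    Controllable A B := by
  intro l
  rcases le_or_gt 0 l.re with hl | hl
  · exact hA l hl
  · rw [← rank_hautus_neg]
    exact hnegA (-l) (by simpa using hl.le)

/-- **Theorem (stabilizability = controllability).** The structured system `(𝒜, ℬ)` is
strongly structurally stabilizable iff it is strongly structurally controllable. -/
theorem ss_stabilizable_iff_ss_controllable {n m : ℕ} (𝒜 : Matrix (Fin n) (Fin n) PSym)
    (ℬ : Matrix (Fin n) (Fin m) PSym) :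
    StrStrStabilizable 𝒜 ℬ ↔ StrStrControllable 𝒜 ℬ :=
  ⟨fun h A hA B hB => controllable_of_stabilizable_of_stabilizable_neg (h A hA B hB)
      (h (-A) (neg_mem_patternClass hA) B hB),
    fun h A hA B hB => (h A hA B hB).stabilizable⟩
end

section
/- Let M be a p×q pattern matrix with p ≤ q, and consider the directed graph G(M) with each node colored white or black. Let D ∈ ℝ^{p×p} be the diagonal matrix with D_kk = 1 if node k is black and D_kk = 0 otherwise. Suppose j ∈ {1,...,p} is a node for which there exists a node i ∈ {1,...,p} (possibly i = j) such that j is the only white out-neighbor of i and (i,j) ∈ E_∗. Then for every real matrix M ∈ P(M), the matrix [M D] has full row rank if and only if the matrix [M (D + e_j e_j^T)] has full row rank, where e_j denotes the j-th standard basis column vector. -/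
open Matrix

/-!
`[M B]` has full row rank iff no nonzero row vector `x` has `x M = 0` and `x B = 0`. For a
diagonal 0/1 matrix `B` the second condition says that `x` vanishes on the black nodes, and
adding `eⱼeⱼᵀ` also demands `xⱼ = 0`. That is automatic: every nonzero entry of column `i` of `M`
other than `M j i` lies in a black row, so `(x M)ᵢ = xⱼ M j i`, and `M j i ≠ 0`.
-/

namespace Matrix

theorem rank_eq_card_iff_vecMul_eq_zero_s7 {m n K : Type*} [Fintype m] [Fintype n] [Field K]
    (A : Matrix m n K) : A.rank = Fintype.card m ↔ ∀ x : m → K, x ᵥ* A = 0 → x = 0 := by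
  rw [rank_eq_finrank_span_row, eq_comm, ← Set.finrank,
    ← linearIndependent_iff_card_eq_finrank_span, ← vecMul_injective_iff, ← coe_vecMulLinear,
    injective_iff_map_eq_zero]
  rfl

variable {m n n' R : Type*} [Fintype m] [Semiring R]

theorem vecMul_fromCols_eq_zero_iff (A : Matrix m n R) (B : Matrix m n' R) (x : m → R) :
    x ᵥ* fromCols A B = 0 ↔ x ᵥ* A = 0 ∧ x ᵥ* B = 0 := by
  rw [vecMul_fromCols, ← Sum.elim_zero_zero, Sum.elim_eq_iff]

theorem vecMul_diagonal_eq_zero_iff [DecidableEq m] [NoZeroDivisors R] (d x : m → R) :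
    x ᵥ* diagonal d = 0 ↔ ∀ k, d k ≠ 0 → x k = 0 := by
  rw [funext_iff]
  simp only [vecMul_diagonal, Pi.zero_apply, mul_eq_zero]
  grind

theorem rank_fromCols_diagonal_eq_card_iff {K : Type*} [Fintype n] [Field K] [DecidableEq m]
    (A : Matrix m n K) (d : m → K) :
    (fromCols A (diagonal d)).rank = Fintype.card m ↔
      ∀ x : m → K, x ᵥ* A = 0 → (∀ k, d k ≠ 0 → x k = 0) → x = 0 := by
  simp only [rank_eq_card_iff_vecMul_eq_zero_s7, vecMul_fromCols_eq_zero_iff,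
    vecMul_diagonal_eq_zero_iff, and_imp]

end Matrix

open Matrix

theorem PatternClass.apply_eq_zero_of_vecMul_eq_zero {R C : Type*} [Fintype R]
    {ℳ : Matrix R C PSym} {M : Matrix R C ℝ} (hM : M ∈ PatternClass ℳ) {black : R → Bool}
    {j : R} {c : C} (hstar : ℳ j c = PSym.star)
    (honly : ∀ k, ℳ k c ≠ PSym.zero → black k = false → k = j)
    {x : R → ℝ} (hx : x ᵥ* M = 0) (hxblack : ∀ k, black k = true → x k = 0) : x j = 0 := by
  have hcol : ∑ k, x k * M k c = x j * M j c := by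
    refine Finset.sum_eq_single j (fun k _ hkj => ?_) (absurd (Finset.mem_univ j))
    cases hk : black k
    · rw [(hM k c).1 (not_imp_comm.mp (honly k · hk) hkj), mul_zero]
    · rw [hxblack k hk, zero_mul]
  have hzero : ∑ k, x k * M k c = 0 := congrFun hx c
  rw [hcol, mul_eq_zero] at hzero
  exact hzero.resolve_right ((hM j c).2 hstar)

/-- **Lemma 2.** Given a black/white coloring of the nodes (rows) of `G(ℳ)`, let `D` be
the diagonal matrix with `D_kk = 1` iff node `k` is black. If node `j ∈ {1,...,p}` is
the only white out-neighbor of some node `i ∈ {1,...,p}` (possibly `i = j`) and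
`(i, j) ∈ E_∗`, then for every `M ∈ P(ℳ)`, `[M D]` has full row rank iff
`[M (D + eⱼeⱼᵀ)]` has full row rank. -/
theorem rank_insert_black_node {p q : ℕ} (hpq : p ≤ q) (ℳ : Matrix (Fin p) (Fin q) PSym)
    (black : Fin p → Bool)
    (D : Matrix (Fin p) (Fin p) ℝ)
    (hD : D = Matrix.diagonal (fun k => if black k then (1 : ℝ) else 0))
    (j i : Fin p)
    (hstar : ℳ j (Fin.castLE hpq i) = PSym.star)
    (hjwhite : black j = false)
    (honly : ∀ k : Fin p, ℳ k (Fin.castLE hpq i) ≠ PSym.zero → black k = false → k = j) :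
    ∀ M ∈ PatternClass ℳ,
      ((Matrix.fromCols M D).rank = p ↔
        (Matrix.fromCols M (D + Matrix.single j j (1 : ℝ))).rank = p) := by
  intro M hM
  have hDj : D + single j j 1 = diagonal fun k => if black k || decide (k = j) then 1 else 0 := by
    rw [hD, ← diagonal_single, diagonal_add]
    congr 1
    ext k
    by_cases hkj : k = j <;> simp [hkj, hjwhite]
  have hrank := rank_fromCols_diagonal_eq_card_iff M
  rw [Fintype.card_fin] at hrank
  rw [hDj, hD, hrank, hrank]
  simp only [ne_eq, ite_eq_right_iff, one_ne_zero, imp_false, not_not, Bool.or_eq_true,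
    decide_eq_true_eq, or_imp, forall_and, forall_eq]
  refine forall_congr' fun x => forall_congr' fun hx => imp_congr_left ?_
  exact (and_iff_left_of_imp
    (PatternClass.apply_eq_zero_of_vecMul_eq_zero hM hstar honly hx)).symm
end

section
/- Let M be a p×q pattern matrix with p ≤ q. Then M has full row rank (i.e., every real matrix in P(M) has full row rank) if and only if M is of Form III, meaning there exist permutation matrices P1 and P2 such that in P1 M P2 the last p columns form a lower-triangular pattern whose diagonal entries are all ∗ and whose entries strictly above the diagonal are all 0 (entries in the first q−p columns and below the diagonal of the last p columns are arbitrary symbols from {0, ∗, ?}). -/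
open Matrix

/-- A `p × q` pattern matrix (`p ≤ q`) is of Form III if by permutations of rows and
columns it can be brought into the shape `[N T]` where the `p × p` block `T` has `∗` on
the diagonal and `0` strictly above the diagonal. -/
def FormIII {p q : ℕ} (hpq : p ≤ q) (M : Matrix (Fin p) (Fin q) PSym) : Prop :=
  ∃ (σ : Equiv.Perm (Fin p)) (τ : Equiv.Perm (Fin q)),
    (∀ i : Fin p, M (σ i) (τ ⟨q - p + i, by have := i.isLt; omega⟩) = PSym.star) ∧
    (∀ i j : Fin p, i < j →
      M (σ i) (τ ⟨q - p + j, by have := j.isLt; omega⟩) = PSym.zero)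

/-!
If every realisation of `M` has independent rows, some column of `M` is a lone `∗` among `0`s:
otherwise every column has a realisation whose entries sum to zero, and these columns together
form a realisation in which the rows add up to zero. Deleting the row of that `∗` preserves full
row rank, and the deleted column is `0` on all remaining rows, so induction on the number of rows
produces a square submatrix with `∗` on the diagonal and `0` above it. Conversely, in every
realisation this submatrix is lower triangular with nonzero diagonal, hence invertible.
-/

theorem Matrix.rank_eq_card_height_iff_linearIndependent_row {K m n : Type*} [Field K]
    [Fintype m] [Fintype n] (A : Matrix m n K) :
    A.rank = Fintype.card m ↔ LinearIndependent K A.row := by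
  rw [A.rank_eq_finrank_span_row, linearIndependent_iff_card_eq_finrank_span, Set.finrank,
    eq_comm]

theorem PatternClass.nonempty {R C : Type*} (M : Matrix R C PSym) :
    (PatternClass M).Nonempty := by
  classical
  exact ⟨fun i j => if M i j = PSym.star then 1 else 0,
    fun i j => ⟨fun h => by simp [h], fun h => by simp [h]⟩⟩

theorem PatternFullRowRank.submatrix_rows {R R' C : Type*} [Fintype R] [Fintype R'] [Fintype C]
    {M : Matrix R C PSym} (hM : PatternFullRowRank M) {f : R' → R} (hf : Function.Injective f) :
    PatternFullRowRank (M.submatrix f id) := by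
  intro A' hA'
  set A : Matrix R C ℝ := Function.extend f A' (PatternClass.nonempty M).some
  have hAf (i : R') : A (f i) = A' i := hf.extend_apply _ _ _
  have hA : A ∈ PatternClass M := by
    intro r c
    by_cases hr : ∃ i, f i = r
    · obtain ⟨i, rfl⟩ := hr
      rw [hAf]
      exact hA' i c
    · rw [show A r = _ from Function.extend_apply' _ _ _ hr]
      exact (PatternClass.nonempty M).some_mem r c
  rw [Matrix.rank_eq_card_height_iff_linearIndependent_row]
  convert ((Matrix.rank_eq_card_height_iff_linearIndependent_row A).mp (hM A hA)).comp f hf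
  exact funext fun i => (hAf i).symm

theorem exists_sum_eq_zero_of_not_isolated_star {R : Type*} [Fintype R] (s : R → PSym)
    (hs : ∀ r₀, s r₀ = PSym.star → ∃ r₁ ≠ r₀, s r₁ ≠ PSym.zero) :
    ∃ v : R → ℝ, (∀ r, s r = PSym.zero → v r = 0) ∧ (∀ r, s r = PSym.star → v r ≠ 0) ∧
      ∑ r, v r = 0 := by
  classical
  by_cases hstar : ∃ r₀, s r₀ = PSym.star
  swap
  · push Not at hstar
    exact ⟨0, fun _ _ => rfl, fun r h => absurd h (hstar r), by simp⟩
  obtain ⟨r₀, hr₀⟩ := hstar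
  obtain ⟨r₁, hr₁₀, hr₁⟩ := hs r₀ hr₀
  set k := (Finset.univ.filter fun r => s r = PSym.star ∧ r ≠ r₁).card
  have hk : 0 < k := Finset.card_pos.mpr ⟨r₀, by simp [hr₀, hr₁₀.symm]⟩
  refine ⟨fun r => (if s r = PSym.star ∧ r ≠ r₁ then 1 else 0) - if r = r₁ then (k : ℝ) else 0,
    fun r hr => ?_, fun r hr => ?_, ?_⟩
  · have : r ≠ r₁ := by rintro rfl; exact hr₁ hr
    simp [hr, this]
  · by_cases h : r = r₁
    · simp [h, hk.ne']
    · simp [hr, h]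
  · simp [Finset.sum_sub_distrib, Finset.sum_boole, k]

theorem PatternFullRowRank.exists_isolated_star {R C : Type*} [Fintype R] [Fintype C]
    [Nonempty R] {M : Matrix R C PSym} (hM : PatternFullRowRank M) :
    ∃ r₀ c₀, M r₀ c₀ = PSym.star ∧ ∀ r ≠ r₀, M r c₀ = PSym.zero := by
  by_contra! h
  choose v hv₀ hv_star hv_sum using fun c => exists_sum_eq_zero_of_not_isolated_star _ (h · c)
  set A : Matrix R C ℝ := fun r c => v c r
  have hA : A ∈ PatternClass M := fun r c => ⟨hv₀ c r, hv_star c r⟩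
  have hli := Fintype.linearIndependent_iff.mp
    (A.rank_eq_card_height_iff_linearIndependent_row.mp (hM A hA))
  have hsum : ∑ r, (1 : ℝ) • A.row r = 0 := by
    ext c
    simpa [Matrix.row, A, Finset.sum_apply] using hv_sum c
  exact one_ne_zero <| hli (fun _ => 1) hsum (Classical.arbitrary R)

/-- The rows `r` and columns `c` of `M` carry the block `T` of Form III. -/
structure IsStarTriangular {R C ι : Type*} [LT ι] (M : Matrix R C PSym) (r : ι → R)
    (c : ι → C) : Prop where
  diag : ∀ i, M (r i) (c i) = PSym.star
  above : ∀ ⦃i j⦄, i < j → M (r i) (c j) = PSym.zero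

namespace IsStarTriangular

variable {R C ι : Type*} [LinearOrder ι] {M : Matrix R C PSym} {r : ι → R} {c : ι → C}

theorem injective_rows (h : IsStarTriangular M r c) : Function.Injective r :=
  .of_lt_imp_ne fun i j hij hr => by simpa [hr, h.diag] using h.above hij

theorem injective_cols (h : IsStarTriangular M r c) : Function.Injective c :=
  .of_lt_imp_ne fun i j hij hc => by simpa [← hc, h.diag] using h.above hij

theorem patternFullRowRank [Fintype R] [Fintype C] [Fintype ι] (h : IsStarTriangular M r c)
    (hr : Function.Surjective r) : PatternFullRowRank M := by
  classical
  intro A hA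
  set T := A.submatrix r c
  have hT : T.IsLowerTriangular := fun i j hij => (hA _ _).1 (h.above hij)
  have hdet : T.det ≠ 0 := by
    rw [Matrix.det_of_isLowerTriangular T hT]
    exact Finset.prod_ne_zero_iff.mpr fun i _ => (hA _ _).2 (h.diag i)
  refine le_antisymm A.rank_le_card_height ?_
  calc Fintype.card R ≤ Fintype.card ι := Fintype.card_le_of_surjective r hr
    _ = T.rank := (T.rank_of_isUnit ((T.isUnit_iff_isUnit_det).mpr hdet.isUnit)).symm
    _ ≤ A.rank := A.rank_submatrix_le r c

end IsStarTriangular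

theorem PatternFullRowRank.exists_isStarTriangular {R C : Type*} [Fintype R] [Fintype C]
    {M : Matrix R C PSym} (hM : PatternFullRowRank M) {n : ℕ} (hn : Fintype.card R = n) :
    ∃ (r : Fin n → R) (c : Fin n → C), IsStarTriangular M r c := by
  classical
  induction n generalizing R with
  | zero => exact ⟨Fin.elim0, Fin.elim0, ⟨fun i => i.elim0, fun i => i.elim0⟩⟩
  | succ m ih =>
    have : Nonempty R := Fintype.card_pos_iff.mp (by omega)
    obtain ⟨r₀, c₀, hstar, hzero⟩ := hM.exists_isolated_star
    obtain ⟨r, c, hrc⟩ := ih (hM.submatrix_rows (f := Subtype.val (p := (· ≠ r₀)))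
      Subtype.val_injective) (by simp [hn])
    refine ⟨Fin.snoc (α := fun _ => R) (Subtype.val ∘ r) r₀, Fin.snoc (α := fun _ => C) c c₀,
      ⟨fun i => ?_, fun i j hij => ?_⟩⟩
    · induction i using Fin.lastCases with
      | last => simpa using hstar
      | cast i => simpa using hrc.diag i
    · induction j using Fin.lastCases with
      | last =>
        obtain ⟨i, rfl⟩ := Fin.exists_castSucc_eq.mpr hij.ne
        simpa using hzero _ (r i).2
      | cast j =>
        induction i using Fin.lastCases with
        | last => exact absurd hij (not_lt.mpr (Fin.le_last _))
        | cast i => simpa using hrc.above (Fin.castSucc_lt_castSucc_iff.mp hij)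

theorem formIII_iff_exists_isStarTriangular {p q : ℕ} (hpq : p ≤ q)
    (M : Matrix (Fin p) (Fin q) PSym) :
    FormIII hpq M ↔ ∃ (r : Fin p → Fin p) (c : Fin p → Fin q), IsStarTriangular M r c := by
  set shift : Fin p → Fin q := fun j => ⟨q - p + j, by omega⟩
  constructor
  · rintro ⟨σ, τ, hdiag, habove⟩
    exact ⟨σ, τ ∘ shift, hdiag, habove⟩
  · rintro ⟨r, c, h⟩
    have hshift : Function.Injective shift := fun i j hij => Fin.ext (by simpa [shift] using hij)
    obtain ⟨τ, hτ⟩ := Equiv.Perm.exists_extending_pair shift c hshift h.injective_cols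
    refine ⟨Equiv.ofBijective r (Finite.injective_iff_bijective.mp h.injective_rows), τ,
      fun i => ?_, fun i j hij => ?_⟩
    · show M (r i) (τ (shift i)) = _
      rw [hτ]
      exact h.diag i
    · show M (r i) (τ (shift j)) = _
      rw [hτ]
      exact h.above hij

/-- **Lemma 1.** A `p × q` pattern matrix with `p ≤ q` has full row rank iff it is of
Form III. -/
theorem full_row_rank_iff_formIII {p q : ℕ} (hpq : p ≤ q)
    (ℳ : Matrix (Fin p) (Fin q) PSym) :
    PatternFullRowRank ℳ ↔ FormIII hpq ℳ := by
  rw [formIII_iff_exists_isStarTriangular]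
  refine ⟨fun h => h.exists_isStarTriangular (Fintype.card_fin p), ?_⟩
  rintro ⟨r, c, h⟩
  exact h.patternFullRowRank (Finite.injective_iff_surjective.mp h.injective_rows)
end

section
/- Consider the 3×3 pattern matrix A with rows (∗, 0, ∗), (0, 0, ∗), (?, ∗, ∗) and the 3×2 pattern matrix B with rows (∗, 0), (0, ∗), (?, 0). Then the structured system (A,B) is strongly structurally controllable, i.e., for every real matrix A ∈ P(A) and B ∈ P(B) the pair (A,B) is controllable. -/
open Matrix

/-- `PatternClass` with coefficients in an arbitrary `K`, so that it applies to the complex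
Hautus matrix. -/
def FitsPattern {R C K : Type*} [Zero K] (P : Matrix R C PSym) (M : Matrix R C K) : Prop :=
  ∀ i j, (P i j = PSym.zero → M i j = 0) ∧ (P i j = PSym.star → M i j ≠ 0)

/-- The pattern of `A - λ • 1` when `A` ranges over the pattern class of `𝒜` and `λ` over `ℂ`. -/
def shiftedPattern {n : ℕ} (𝒜 : Matrix (Fin n) (Fin n) PSym) : Matrix (Fin n) (Fin n) PSym :=
  fun i j => if i = j then PSym.arb else 𝒜 i j

section ZeroForcing

variable {R C K : Type*} [Fintype R] {P : Matrix R C PSym} {M : Matrix R C K}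

theorem apply_eq_zero_of_vecMul_eq_zero [Semiring K] [NoZeroDivisors K] {g : R → K}
    (hg : g ᵥ* M = 0) {c : C} {j : R} (hjc : M j c ≠ 0)
    (hothers : ∀ k, k ≠ j → g k * M k c = 0) : g j = 0 := by
  have hsum : ∑ k, g k * M k c = g j * M j c :=
    Finset.sum_eq_single j (fun k _ hk => hothers k hk) (by simp)
  have hcol : ∑ k, g k * M k c = 0 := congrFun hg c
  exact (mul_eq_zero.mp (hsum ▸ hcol)).resolve_right hjc

/-- Each colour change step is the column equation `(g ᵥ* M) c = 0`, in which all terms but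
`g j * M j c` already vanish. -/
theorem ColorStep.vecMul_eq_zero [Semiring K] [NoZeroDivisors K] {S : Set R}
    (hS : ColorStep P S) (hM : FitsPattern P M) {g : R → K} (hg : g ᵥ* M = 0) :
    ∀ j ∈ S, g j = 0 := by
  induction hS with
  | init => simp
  | step S c j _ hstar _ huniq ih =>
    have hj : g j = 0 := by
      refine apply_eq_zero_of_vecMul_eq_zero hg ((hM j c).2 hstar) fun k hkj => ?_
      by_cases hk : P k c = PSym.zero
      · simp [(hM k c).1 hk]
      · have hkS : k ∈ S := by
          by_contra hkS
          exact hkj (huniq k hk hkS)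
        simp [ih k hkS]
    simpa [hj] using ih

theorem PatternColorable.linearIndependent_row [CommRing K] [NoZeroDivisors K]
    (hP : PatternColorable P) (hM : FitsPattern P M) : LinearIndependent K M.row := by
  rw [← Matrix.vecMul_injective_iff, ← Matrix.coe_vecMulLinear, injective_iff_map_eq_zero]
  exact fun g hg => funext fun j => hP.vecMul_eq_zero hM hg j (Set.mem_univ j)

end ZeroForcing

theorem fitsPattern_hautus {n m : ℕ} {𝒜 : Matrix (Fin n) (Fin n) PSym}
    {ℬ : Matrix (Fin n) (Fin m) PSym} {A : Matrix (Fin n) (Fin n) ℝ}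
    {B : Matrix (Fin n) (Fin m) ℝ}
    (hA : A ∈ PatternClass 𝒜) (hB : B ∈ PatternClass ℬ) (l : ℂ) :
    FitsPattern (Matrix.fromCols (shiftedPattern 𝒜) ℬ)
      (Matrix.fromCols (A.map Complex.ofReal - l • (1 : Matrix (Fin n) (Fin n) ℂ))
        (B.map Complex.ofReal)) := by
  intro i j
  rcases j with j | j
  · by_cases hij : i = j
    · simp [shiftedPattern, hij]
    · simpa [shiftedPattern, hij, Matrix.one_apply_ne hij] using hA i j
  · simpa using hB i j

theorem StrStrControllable.of_patternColorable {n m : ℕ} {𝒜 : Matrix (Fin n) (Fin n) PSym}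
    {ℬ : Matrix (Fin n) (Fin m) PSym}
    (h : PatternColorable (Matrix.fromCols (shiftedPattern 𝒜) ℬ)) :
    StrStrControllable 𝒜 ℬ := fun _ hA _ hB l =>
  ((h.linearIndependent_row (fitsPattern_hautus hA hB l)).rank_matrix).trans (Fintype.card_fin n)

/-- The structured system of the electrical circuit example is strongly structurally
controllable. -/
theorem circuit_example_controllable :
    StrStrControllable
      !![PSym.star, PSym.zero, PSym.star;
         PSym.zero, PSym.zero, PSym.star;
         PSym.arb,  PSym.star, PSym.star]
      !![PSym.star, PSym.zero;
         PSym.zero, PSym.star;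
         PSym.arb,  PSym.zero] := by
  apply StrStrControllable.of_patternColorable
  have hS : (insert 0 (insert 2 (insert 1 ∅)) : Set (Fin 3)) = Set.univ := by
    ext i; fin_cases i <;> simp
  rw [PatternColorable, ← hS]
  refine .step _ (Sum.inl 2) 0 (.step _ (Sum.inl 1) 2 (.step _ (Sum.inr 1) 1 .init rfl ?_ ?_)
    rfl ?_ ?_) rfl ?_ ?_
  all_goals simp only [Set.mem_insert_iff, Set.mem_empty_iff_false]; decide
end

section
/- Let A be an n×n pattern matrix containing no ? entries (every entry is 0 or ∗), let W_L = {w_1,...,w_m} ⊆ {1,...,n} be a set of m distinct leader nodes, and let B be the n×m pattern matrix with B_ij = ∗ if i = w_j and B_ij = 0 otherwise. Then the graph G([A B]) is colorable if and only if W_L is a loopy zero forcing set for the directed graph G(A). -/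
open Matrix

/-- Sets of black nodes obtainable from the initial black set `S₀` by the loopy color
change rule: a node `i` of any color with exactly one white out-neighbor `j`
(`F i j` meaning there is an edge from `i` to `j`) colors `j` black. -/
inductive LoopyZFStep {V : Type*} (F : V → V → Prop) (S₀ : Set V) : Set V → Prop
  | init : LoopyZFStep F S₀ S₀
  | step (S : Set V) (i j : V)
      (hS : LoopyZFStep F S₀ S)
      (hedge : F i j)
      (hwhite : j ∉ S)
      (huniq : ∀ k, F i k → k ∉ S → k = j) :
      LoopyZFStep F S₀ (insert j S)

/-- `S₀` is a loopy zero forcing set for the directed graph with edge relation `F` if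
all nodes can be colored black by the loopy color change rule. -/
def LoopyZeroForcingSet {V : Type*} (F : V → V → Prop) (S₀ : Set V) : Prop :=
  LoopyZFStep F S₀ Set.univ

/-!
A column `i` of `[𝒜 ℬ]` coming from `𝒜` has as out-neighbours exactly the out-neighbours of `i`
in `G(𝒜)`, all of them through `∗`-edges since `𝒜` has no `?` entries; so forcing through such a
column is precisely a loopy forcing step in `G(𝒜)`. The columns coming from `ℬ` each have a single
out-neighbour, a leader, which they can force at any time. Hence a coloring of `G([𝒜 ℬ])` is a loopy
forcing sequence from `W_L` with the leaders interspersed, and conversely.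
-/

variable {R C : Type*}

theorem ColorStep.force {M : Matrix R C PSym} {S : Set R} (hS : ColorStep M S) {c : C} {j : R}
    (hstar : M j c = PSym.star) (huniq : ∀ k, M k c ≠ PSym.zero → k ∉ S → k = j) :
    ColorStep M (insert j S) := by
  by_cases hj : j ∈ S
  · rwa [Set.insert_eq_of_mem hj]
  · exact .step S c j hS hstar hj huniq

theorem LoopyZFStep.force {F : R → R → Prop} {S₀ S : Set R} (hS : LoopyZFStep F S₀ S) {i j : R}
    (hedge : F i j) (huniq : ∀ k, F i k → k ∉ S → k = j) : LoopyZFStep F S₀ (insert j S) := by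
  by_cases hj : j ∈ S
  · rwa [Set.insert_eq_of_mem hj]
  · exact .step S i j hS hedge hj huniq

theorem ColorStep.fromCols_right {C' : Type*} {A : Matrix R C' PSym} {B : Matrix R C PSym}
    {S : Set R} (h : ColorStep B S) : ColorStep (fromCols A B) S := by
  induction h with
  | init => exact .init
  | step S c j _ hstar hwhite huniq ih =>
    exact .step S (Sum.inr c) j ih (by simpa using hstar) hwhite (by simpa using huniq)

theorem ColorStep.range_of_eq_ite [DecidableEq R] [Finite C] {w : C → R} {B : Matrix R C PSym}
    (hB : ∀ i c, B i c = if i = w c then PSym.star else PSym.zero) :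
    ColorStep B (Set.range w) := by
  classical
  have := Fintype.ofFinite C
  have hs : ∀ s : Finset C, ColorStep B (w '' s) := by
    intro s
    induction s using Finset.induction_on with
    | empty => simpa using ColorStep.init
    | insert c s _ ih =>
      rw [Finset.coe_insert, Set.image_insert_eq]
      exact ih.force (c := c) (by simp [hB]) fun k hk _ => by simpa [hB] using hk
  simpa using hs Finset.univ

theorem LoopyZFStep.union_of_colorStep_fromCols {A : Matrix R R PSym} {B : Matrix R C PSym}
    {S₀ S : Set R} (hB : ∀ j c, B j c = PSym.star → j ∈ S₀) (h : ColorStep (fromCols A B) S) :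
    LoopyZFStep (fun a b => A b a = PSym.star) S₀ (S ∪ S₀) := by
  induction h with
  | init => simpa using LoopyZFStep.init
  | step S c j _ hstar _ huniq ih =>
    rw [Set.insert_union]
    cases c with
    | inl i =>
      exact ih.force (i := i) (by simpa using hstar) fun k hk hkS =>
        huniq k (by simp [hk]) fun hkS' => hkS (.inl hkS')
    | inr c => rwa [Set.insert_eq_of_mem (.inr (hB j c (by simpa using hstar)))]

theorem ColorStep.fromCols_of_loopyZFStep {A : Matrix R R PSym} {B : Matrix R C PSym}
    {S₀ S : Set R} (hA : ∀ i j, A i j ≠ PSym.arb) (h₀ : ColorStep (fromCols A B) S₀)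
    (h : LoopyZFStep (fun a b => A b a = PSym.star) S₀ S) : ColorStep (fromCols A B) S := by
  induction h with
  | init => exact h₀
  | step S i j _ hedge hwhite huniq ih =>
    refine .step S (Sum.inl i) j ih (by simpa using hedge) hwhite fun k hk hkS => huniq k ?_ hkS
    have := hA k i
    cases hki : A k i <;> simp_all

theorem colorable_iff_loopy_zero_forcing_general {n m : ℕ}
    (𝒜 : Matrix (Fin n) (Fin n) PSym) (h𝒜 : ∀ i j, 𝒜 i j ≠ PSym.arb)
    (w : Fin m → Fin n)
    (ℬ : Matrix (Fin n) (Fin m) PSym)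
    (hℬ : ∀ i j, ℬ i j = if i = w j then PSym.star else PSym.zero) :
    PatternColorable (Matrix.fromCols 𝒜 ℬ) ↔
      LoopyZeroForcingSet (fun a b => 𝒜 b a = PSym.star) (Set.range w) := by
  constructor
  · intro h
    have hleaders : ∀ j c, ℬ j c = PSym.star → j ∈ Set.range w := fun j c hjc =>
      ⟨c, by simpa [hℬ, eq_comm] using hjc⟩
    simpa [LoopyZeroForcingSet] using LoopyZFStep.union_of_colorStep_fromCols hleaders h
  · exact ColorStep.fromCols_of_loopyZFStep h𝒜
      (ColorStep.fromCols_right (ColorStep.range_of_eq_ite hℬ))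

/-- For an `n × n` pattern matrix `𝒜` without `?` entries and a leader set
`W_L = {w 1, ..., w m}` with corresponding input pattern `ℬ`, the graph `G([𝒜 ℬ])` is
colorable iff `W_L` is a loopy zero forcing set for `G(𝒜)` (whose edge `(j, i)` exists
iff `𝒜 i j = ∗`). -/
theorem colorable_iff_loopy_zero_forcing {n m : ℕ}
    (𝒜 : Matrix (Fin n) (Fin n) PSym) (h𝒜 : ∀ i j, 𝒜 i j ≠ PSym.arb)
    (w : Fin m → Fin n) (hw : Function.Injective w)
    (ℬ : Matrix (Fin n) (Fin m) PSym)
    (hℬ : ∀ i j, ℬ i j = if i = w j then PSym.star else PSym.zero) :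
    PatternColorable (Matrix.fromCols 𝒜 ℬ) ↔
      LoopyZeroForcingSet (fun a b => 𝒜 b a = PSym.star) (Set.range w) :=
  colorable_iff_loopy_zero_forcing_general 𝒜 h𝒜 w ℬ hℬ
end

section
/- Let A be an n×n pattern matrix all of whose diagonal entries are ? and none of whose off-diagonal entries is ? (off-diagonal entries are 0 or ∗), let W_L = {w_1,...,w_m} ⊆ {1,...,n} be a set of m distinct leader nodes, and let B be the n×m pattern matrix with B_ij = ∗ if i = w_j and B_ij = 0 otherwise. Let H be the directed graph on nodes {1,...,n} with edge (j,i) iff A_ij = ∗ (so H has no self-loops). Then the graph G([A B]) is colorable if and only if W_L is an ordinary zero forcing set for H. -/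
open Matrix

/-- Sets of black nodes obtainable from the initial black set `S₀` by the ordinary color
change rule: a BLACK node `i` with exactly one white out-neighbor `j` colors `j`
black. -/
inductive OrdZFStep {V : Type*} (F : V → V → Prop) (S₀ : Set V) : Set V → Prop
  | init : OrdZFStep F S₀ S₀
  | step (S : Set V) (i j : V)
      (hS : OrdZFStep F S₀ S)
      (hblack : i ∈ S)
      (hedge : F i j)
      (hwhite : j ∉ S)
      (huniq : ∀ k, F i k → k ∉ S → k = j) :
      OrdZFStep F S₀ (insert j S)

/-- `S₀` is an ordinary zero forcing set for the directed graph with edge relation `F`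
if all nodes can be colored black by the ordinary color change rule. -/
def OrdinaryZeroForcingSet {V : Type*} (F : V → V → Prop) (S₀ : Set V) : Prop :=
  OrdZFStep F S₀ Set.univ

/-!
Every diagonal entry of `𝒜` is `?`, so a state node `c` of `G([𝒜 ℬ])` is its own out-neighbour
through a non-`∗` edge: it forces only once it is black, and never itself. Its remaining
out-neighbours are its `∗`-out-neighbours, i.e. its out-neighbours in `H`, so its forces are
ordinary zero forcing steps in `H`. The input node of column `j` of `ℬ` has the single
out-neighbour `w j`, which it colors at once. Hence the black sets of `G([𝒜 ℬ])` are, up to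
`range w`, those of zero forcing in `H` started from `range w`.
-/

namespace ColorStep

variable {R C : Type*} {M : Matrix R C PSym} {S : Set R}

theorem insert_of_star (hS : ColorStep M S) {c : C} {j : R} (hstar : M j c = PSym.star)
    (huniq : ∀ k, M k c ≠ PSym.zero → k ∉ S → k = j) : ColorStep M (insert j S) := by
  by_cases hj : j ∈ S
  · rwa [Set.insert_eq_of_mem hj]
  · exact step S c j hS hstar hj huniq

end ColorStep

namespace OrdZFStep

variable {V : Type*} {F : V → V → Prop} {S₀ S : Set V}

theorem insert_of_mem (hS : OrdZFStep F S₀ S) {i j : V} (hi : i ∈ S) (hedge : F i j)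
    (huniq : ∀ k, F i k → k ∉ S → k = j) : OrdZFStep F S₀ (insert j S) := by
  by_cases hj : j ∈ S
  · rwa [Set.insert_eq_of_mem hj]
  · exact step S i j hS hi hedge hj huniq

end OrdZFStep

section FromCols

variable {V ι : Type*} {𝒜 : Matrix V V PSym} {ℬ : Matrix V ι PSym}

theorem ColorStep.ordZFStep_union {S₀ S : Set V} (hdiag : ∀ i, 𝒜 i i = PSym.arb)
    (hℬ : ∀ i j, ℬ i j = PSym.star → i ∈ S₀) (h : ColorStep (fromCols 𝒜 ℬ) S) :
    OrdZFStep (fun a b => 𝒜 b a = PSym.star) S₀ (S ∪ S₀) := by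
  induction h with
  | init => simpa using OrdZFStep.init
  | step S c j _ hstar _ huniq ih =>
    rw [Set.insert_union]
    cases c with
    | inr b =>
      rwa [Set.insert_eq_of_mem (Set.mem_union_right S (hℬ j b hstar))]
    | inl c =>
      simp only [fromCols_apply_inl] at hstar huniq
      have hcj : c ≠ j := by rintro rfl; simp [hdiag] at hstar
      have hc : c ∈ S := by
        by_contra hc
        exact hcj (huniq c (by simp [hdiag]) hc)
      refine ih.insert_of_mem (Or.inl hc) hstar fun k hk hkS => huniq k ?_ ?_
      · simp [hk]
      · exact fun hkS' => hkS (Or.inl hkS')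

theorem ColorStep.range_of_leaders [DecidableEq V] [Finite ι] (w : ι → V)
    (hℬ : ∀ i j, ℬ i j = if i = w j then PSym.star else PSym.zero) :
    ColorStep (fromCols 𝒜 ℬ) (Set.range w) := by
  suffices ∀ s : Set ι, s.Finite → ColorStep (fromCols 𝒜 ℬ) (w '' s) by
    simpa using this Set.univ Set.finite_univ
  intro s hs
  induction s, hs using Set.Finite.induction_on with
  | empty => simpa using ColorStep.init
  | @insert a s _ _ ih =>
    rw [Set.image_insert_eq]
    refine ih.insert_of_star (c := Sum.inr a) (by simp [hℬ]) fun k hk _ => ?_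
    by_contra hka
    simp [hℬ, hka] at hk

theorem OrdZFStep.colorStep {S₀ S : Set V} (hoff : ∀ i j, i ≠ j → 𝒜 i j ≠ PSym.arb)
    (h₀ : ColorStep (fromCols 𝒜 ℬ) S₀) (h : OrdZFStep (fun a b => 𝒜 b a = PSym.star) S₀ S) :
    ColorStep (fromCols 𝒜 ℬ) S := by
  induction h with
  | init => exact h₀
  | step S i j _ hi hedge hj huniq ih =>
    refine ColorStep.step S (Sum.inl i) j ih hedge hj fun k hk hkS => huniq k ?_ hkS
    have hki : k ≠ i := fun hki => hkS (hki ▸ hi)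
    simp only [fromCols_apply_inl] at hk
    cases hs : 𝒜 k i
    · exact absurd hs hk
    · rfl
    · exact absurd hs (hoff k i hki)

end FromCols

theorem colorable_iff_ordinary_zero_forcing_general {n m : ℕ}
    (𝒜 : Matrix (Fin n) (Fin n) PSym)
    (hdiag : ∀ i, 𝒜 i i = PSym.arb)
    (hoff : ∀ i j, i ≠ j → 𝒜 i j ≠ PSym.arb)
    (w : Fin m → Fin n)
    (ℬ : Matrix (Fin n) (Fin m) PSym)
    (hℬ : ∀ i j, ℬ i j = if i = w j then PSym.star else PSym.zero) :
    PatternColorable (Matrix.fromCols 𝒜 ℬ) ↔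
      OrdinaryZeroForcingSet (fun a b => 𝒜 b a = PSym.star) (Set.range w) := by
  constructor
  · intro h
    have hleaders : ∀ i j, ℬ i j = PSym.star → i ∈ Set.range w := fun i j hij => by
      by_contra hi
      simp [hℬ, show i ≠ w j from fun e => hi ⟨j, e.symm⟩] at hij
    simpa [OrdinaryZeroForcingSet] using h.ordZFStep_union hdiag hleaders
  · exact (·.colorStep hoff (ColorStep.range_of_leaders w hℬ))

/-- For an `n × n` pattern matrix `𝒜` whose diagonal entries are all `?` and whose
off-diagonal entries are never `?`, and a leader set `W_L = {w 1, ..., w m}` with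
corresponding input pattern `ℬ`, the graph `G([𝒜 ℬ])` is colorable iff `W_L` is an
ordinary zero forcing set for the graph `H` on `{1,...,n}` with edge `(j, i)` iff
`𝒜 i j = ∗` (which has no self-loops). -/
theorem colorable_iff_ordinary_zero_forcing {n m : ℕ}
    (𝒜 : Matrix (Fin n) (Fin n) PSym)
    (hdiag : ∀ i, 𝒜 i i = PSym.arb)
    (hoff : ∀ i j, i ≠ j → 𝒜 i j ≠ PSym.arb)
    (w : Fin m → Fin n) (hw : Function.Injective w)
    (ℬ : Matrix (Fin n) (Fin m) PSym)
    (hℬ : ∀ i j, ℬ i j = if i = w j then PSym.star else PSym.zero) :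
    PatternColorable (Matrix.fromCols 𝒜 ℬ) ↔
      OrdinaryZeroForcingSet (fun a b => 𝒜 b a = PSym.star) (Set.range w) :=
  colorable_iff_ordinary_zero_forcing_general 𝒜 hdiag hoff w ℬ hℬ
end

section
/- Let M be a p×q pattern matrix with p ≤ q, and suppose that no column of M has exactly one ∗ entry with all other entries equal to 0 (i.e., every column either has all entries 0, or has exactly one ? entry and all other entries 0, or has at least two entries in {∗, ?}). Then there exists a real matrix M ∈ P(M) all of whose column sums are zero, i.e., 𝟙^T M = 0 where 𝟙 is the all-ones vector in ℝ^p; consequently, if p ≥ 1, this M does not have full row rank. -/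
open Matrix

/-! Each column is treated separately: put `1` at every position not fixed to `0` and let one `∗`
position absorb the column sum, i.e. give it `1 - s`, where `s` is the number of such positions.
This is nonzero because a column containing a `∗` is not a lone `∗`, so `s ≥ 2`. A vector of
ones in the left kernel makes the rows linearly dependent. -/

theorem Matrix.rank_ne_card_of_vecMul_eq_zero {K m n : Type*} [Field K] [Fintype m] [Fintype n]
    {A : Matrix m n K} {v : m → K} (hv : v ≠ 0) (h : v ᵥ* A = 0) :
    A.rank ≠ Fintype.card m := by
  intro hrank
  have hrows : LinearIndependent K A.row := by
    rw [linearIndependent_iff_card_eq_finrank_span, ← hrank, rank_eq_finrank_span_row]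
    rfl
  exact hv (vecMul_injective_iff.mpr hrows (h.trans (zero_vecMul A).symm))

theorem exists_sum_eq_zero_of_not_lone_star {R : Type*} [Fintype R] (v : R → PSym)
    (hv : ¬ ∃ i, v i = PSym.star ∧ ∀ k, k ≠ i → v k = PSym.zero) :
    ∃ x : R → ℝ, (∀ i, (v i = PSym.zero → x i = 0) ∧ (v i = PSym.star → x i ≠ 0)) ∧
      ∑ i, x i = 0 := by
  classical
  by_cases hstar : ∃ i₀, v i₀ = PSym.star
  swap
  · push Not at hstar
    exact ⟨0, fun i => ⟨fun _ => rfl, fun hi => (hstar i hi).elim⟩, by simp⟩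
  obtain ⟨i₀, hi₀⟩ := hstar
  set S := Finset.univ.filter (fun i => v i ≠ PSym.zero)
  have hS : 1 < S.card := by
    push Not at hv
    obtain ⟨k, hki₀, hk⟩ := hv i₀ hi₀
    exact Finset.one_lt_card.mpr
      ⟨i₀, by simp [S, hi₀], k, by simp [S, hk], hki₀.symm⟩
  refine ⟨fun i => (if v i ≠ PSym.zero then 1 else 0) - if i = i₀ then (S.card : ℝ) else 0,
    fun i => ⟨fun hi => ?_, fun hi => ?_⟩, ?_⟩
  · have hii₀ : i ≠ i₀ := by rintro rfl; simp [hi] at hi₀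
    simp [hi, hii₀]
  · have hS' : (1 : ℝ) < S.card := by exact_mod_cast hS
    rcases eq_or_ne i i₀ with rfl | hii₀
    · simpa [hi, sub_eq_zero] using hS'.ne
    · simp [hi, hii₀]
  · rw [Finset.sum_sub_distrib, Finset.sum_boole, Finset.sum_ite_eq']
    simp [S]

theorem exists_mem_patternClass_vecMul_one_eq_zero {R C : Type*} [Fintype R]
    (M : Matrix R C PSym)
    (h : ∀ j, ¬ ∃ i, M i j = PSym.star ∧ ∀ k, k ≠ i → M k j = PSym.zero) :
    ∃ A ∈ PatternClass M, (fun _ => (1 : ℝ)) ᵥ* A = 0 := by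
  choose x hx hsum using fun j => exists_sum_eq_zero_of_not_lone_star (fun i => M i j) (h j)
  refine ⟨of fun i j => x j i, fun i j => hx j i, funext fun j => ?_⟩
  simpa [vecMul, dotProduct] using hsum j

theorem exists_member_with_zero_column_sums_general {p q : ℕ}
    (ℳ : Matrix (Fin p) (Fin q) PSym)
    (h : ∀ j : Fin q,
      ¬ ∃ i : Fin p, ℳ i j = PSym.star ∧ ∀ k : Fin p, k ≠ i → ℳ k j = PSym.zero) :
    ∃ M ∈ PatternClass ℳ,
      Matrix.vecMul (fun _ => (1 : ℝ)) M = 0 ∧ (1 ≤ p → M.rank ≠ p) := by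
  obtain ⟨M, hM, hsum⟩ := exists_mem_patternClass_vecMul_one_eq_zero ℳ h
  refine ⟨M, hM, hsum, fun hp => ?_⟩
  have hone : (fun _ : Fin p => (1 : ℝ)) ≠ 0 := fun h₀ => by
    simpa using congrFun h₀ ⟨0, hp⟩
  simpa using rank_ne_card_of_vecMul_eq_zero hone hsum

/-- If no column of `ℳ` has exactly one `∗` entry with all other entries `0`, then some
member of `P(ℳ)` has all column sums zero; consequently (if `p ≥ 1`) it does not have
full row rank. -/
theorem exists_member_with_zero_column_sums {p q : ℕ} (hpq : p ≤ q)
    (ℳ : Matrix (Fin p) (Fin q) PSym)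
    (h : ∀ j : Fin q,
      ¬ ∃ i : Fin p, ℳ i j = PSym.star ∧ ∀ k : Fin p, k ≠ i → ℳ k j = PSym.zero) :
    ∃ M ∈ PatternClass ℳ,
      Matrix.vecMul (fun _ => (1 : ℝ)) M = 0 ∧ (1 ≤ p → M.rank ≠ p) :=
  exists_member_with_zero_column_sums_general ℳ h
end
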